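/- Let t and t₁ be tensor reduced monoidal t-structures on a monoidal triangulated category T (each with 0 in its deviation). If t and t₁ are equivalent (i.e. there exist integers m ≤ n with D^{≤m} ⊆ D₁^{≤0} ⊆ D^{≤n}), then t = t₁. -/

import Mathlib

open CategoryTheory Category Limits Pretriangulated Triangulated MonoidalCategory

namespace Paper

variable (C : Type*) [Category C] [Preadditive C] [HasZeroObject C] [HasShift C ℤ]
  [∀ n : ℤ, (shiftFunctor C n).Additive] [Pretriangulated C]

/-- Truncation and cohomology data for a t-structure `t`: the truncation functors
`τ^{≤ n}`, `τ^{≥ n}` together with the natural maps `τ^{≤ n} X ⟶ X ⟶ τ^{≥ n+1} X`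
and the connecting maps forming distinguished truncation triangles. -/
structure TruncData (t : TStructure C) where
  τle : ℤ → C ⥤ C
  τge : ℤ → C ⥤ C
  τle_mem (n : ℤ) (X : C) : t.le n ((τle n).obj X)
  τge_mem (n : ℤ) (X : C) : t.ge n ((τge n).obj X)
  ι (n : ℤ) : τle n ⟶ 𝟭 C
  π (n : ℤ) : 𝟭 C ⟶ τge n
  δ (n : ℤ) (X : C) : (τge (n + 1)).obj X ⟶ ((τle n).obj X)⟦(1 : ℤ)⟧
  triangle_mem (n : ℤ) (X : C) :
    Triangle.mk ((ι n).app X) ((π (n + 1)).app X) (δ n X) ∈ distTriang C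

variable {C}

/-- The cohomological functor `H^n_t := Σ^n ∘ τ^{≤ n} ∘ τ^{≥ n}`, valued in the heart. -/
def TruncData.H {t : TStructure C} (d : TruncData C t) (n : ℤ) : C ⥤ C :=
  d.τge n ⋙ d.τle n ⋙ shiftFunctor C n

/-- The heart `D^{≤ 0} ∩ D^{≥ 0}` of a t-structure. -/
def Heart (t : TStructure C) (X : C) : Prop := t.le 0 X ∧ t.ge 0 X

/-- A t-structure is bounded if every object lies in some `D^{≤ b} ∩ D^{≥ a}`. -/
def IsBounded (t : TStructure C) : Prop := ∀ X : C, ∃ a b : ℤ, t.le b X ∧ t.ge a X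


section Monoidal

variable (C) [MonoidalCategory C]

/-- A monoidal triangulated category: the tensor product is exact in each variable,
with compatibility isomorphisms `Σ(X) ⊗ Y ≅ Σ(X ⊗ Y)` and `X ⊗ Σ(Y) ≅ Σ(X ⊗ Y)`. -/
class MonoidalTriangulated where
  shiftTensor (n : ℤ) (X Y : C) : ((X⟦n⟧) ⊗ Y) ≅ ((X ⊗ Y)⟦n⟧)
  tensorShift (n : ℤ) (X Y : C) : (X ⊗ (Y⟦n⟧)) ≅ ((X ⊗ Y)⟦n⟧)
  whiskerLeft_distinguished (X : C) (T : Triangle C) (hT : T ∈ distTriang C) :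
    Triangle.mk (X ◁ T.mor₁) (X ◁ T.mor₂)
      ((X ◁ T.mor₃) ≫ (tensorShift 1 X T.obj₁).hom) ∈ distTriang C
  whiskerRight_distinguished (Y : C) (T : Triangle C) (hT : T ∈ distTriang C) :
    Triangle.mk (T.mor₁ ▷ Y) (T.mor₂ ▷ Y)
      ((T.mor₃ ▷ Y) ≫ (shiftTensor 1 T.obj₁ Y).hom) ∈ distTriang C

/-- The deviation of the `k`-shifted t-structure `Σ^{-k} t = (D^{≤ k}, D^{≥ k+1})`:
the set of integers `n` with `D^{≤ k} ⊗ D^{≤ k+n} ⊆ D^{≤ k}` and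
`D^{≥ k} ⊗ D^{≥ k+n} ⊆ D^{≥ k}`.  The deviation of `t` itself is `dev C t 0`. -/
def dev (t : TStructure C) (k : ℤ) : Set ℤ :=
  {n | (∀ X Y : C, t.le k X → t.le (k + n) Y → t.le k (X ⊗ Y)) ∧
       (∀ X Y : C, t.ge k X → t.ge (k + n) Y → t.ge k (X ⊗ Y))}

variable {C}

/-- The Künneth formula: `H^n(X ⊗ Y)` is the (bi)product `⊕_{p+q=n} H^p(X) ⊗ H^q(Y)`
(all but finitely many summands are zero, so the product is the coproduct). -/
def Kunneth {t : TStructure C} (d : TruncData C t) : Prop :=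
  ∀ (n : ℤ) (X Y : C),
    ∃ p : ∀ q : ℤ, ((d.H n).obj (X ⊗ Y)) ⟶ (((d.H q).obj X) ⊗ ((d.H (n - q)).obj Y)),
      Nonempty (IsLimit (Fan.mk ((d.H n).obj (X ⊗ Y)) p))

variable (C) in
/-- A monoidal additive category is tensor reduced if `X ⊗ X = 0` implies `X = 0`. -/
def TensorReducedCat : Prop := ∀ X : C, IsZero (X ⊗ X) → IsZero X

/-- A monoidal t-structure is tensor reduced if its heart is: for `X` in the heart,
`X ⊗ X = 0` implies `X = 0`. -/
def TensorReduced (t : TStructure C) : Prop :=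
  ∀ X : C, Heart t X → IsZero (X ⊗ X) → IsZero X

end Monoidal

/-!
Squaring an object doubles the degree of its top `t`-cohomology: by Künneth the top cohomology
of `X ⊗ X` is `H^k(X) ⊗ H^k(X)`, which is nonzero because the heart is tensor reduced. If some
object of `t₁^{≤ 0}` had top `t`-cohomology in degree `k ≥ 1`, its iterated tensor squares would
stay in `t₁^{≤ 0}` (a monoidal aisle) while their top degrees `2^j k` escape every bound
`t^{≤ c} ⊇ t₁^{≤ 0}`. Hence `t₁^{≤ 0} ⊆ t^{≤ 0}`, symmetrically `t^{≤ 0} ⊆ t₁^{≤ 0}`, and a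
t-structure is determined by its aisle.
-/

lemma TStructure.ext_of_le_zero_iff {t t₁ : TStructure C} (h : ∀ X, t.le 0 X ↔ t₁.le 0 X) :
    t = t₁ := by
  have hle : t.le = t₁.le := by
    ext n X
    rw [← t.shift_le n 0 n (add_zero n), ← t₁.shift_le n 0 n (add_zero n),
      ObjectProperty.prop_shift_iff, ObjectProperty.prop_shift_iff, h]
  have hge : t.ge = t₁.ge := by
    ext n X
    simp only [TStructure.ge_iff_isGE, t.isGE_iff_orthogonal (n - 1) n (by omega),
      t₁.isGE_iff_orthogonal (n - 1) n (by omega), ← TStructure.le_iff_isLE, hle]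
  cases t
  cases t₁
  dsimp only at hle hge
  subst hle hge
  rfl

namespace TruncData

variable {t : TStructure C} (d : TruncData C t)

lemma le_iff_isZero_τge {n n₁ : ℤ} (h : n + 1 = n₁) (X : C) :
    t.le n X ↔ IsZero ((d.τge n₁).obj X) := by
  subst h
  have hT := d.triangle_mem n X
  constructor
  · intro hX
    have : t.IsLE ((d.τge (n + 1)).obj X) n := by
      have : t.IsLE ((d.τle n).obj X) n := ⟨d.τle_mem n X⟩
      have := t.isLE_shift ((d.τle n).obj X) n 1 (n - 1)
      exact t.isLE₂ _ (rot_of_distTriang _ hT) n ⟨hX⟩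
        (t.isLE_of_le (((d.τle n).obj X)⟦(1 : ℤ)⟧) (n - 1) n)
    have : t.IsGE ((d.τge (n + 1)).obj X) (n + 1) := ⟨d.τge_mem _ X⟩
    exact t.isZero _ n (n + 1)
  · intro hB
    have : IsIso ((d.ι n).app X) := (Triangle.isZero₃_iff_isIso₁ _ hT).1 hB
    exact (t.le n).prop_of_iso (asIso ((d.ι n).app X)) (d.τle_mem n X)

lemma isIso_ι_app_of_le {n : ℤ} {X : C} (hX : t.le n X) : IsIso ((d.ι n).app X) :=
  (Triangle.isZero₃_iff_isIso₁ _ (d.triangle_mem n X)).1 ((d.le_iff_isZero_τge rfl X).1 hX)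

lemma isZero_τle_obj_of_ge {n : ℤ} {X : C} (hX : t.ge (n + 1) X) :
    IsZero ((d.τle n).obj X) := by
  have : t.IsGE ((d.τle n).obj X) (n + 1) := by
    refine t.isGE₂ _ (inv_rot_of_distTriang _ (d.triangle_mem n X)) (n + 1) ?_ ⟨hX⟩
    have : t.IsGE ((d.τge (n + 1)).obj X) (n + 1) := ⟨d.τge_mem _ X⟩
    have : t.IsGE (((d.τge (n + 1)).obj X)⟦(-1 : ℤ)⟧) (n + 2) :=
      t.isGE_shift ((d.τge (n + 1)).obj X) (n + 1) (-1) (n + 2)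
    exact t.isGE_of_ge (((d.τge (n + 1)).obj X)⟦(-1 : ℤ)⟧) (n + 1) (n + 2)
  have : t.IsLE ((d.τle n).obj X) n := ⟨d.τle_mem n X⟩
  exact t.isZero _ n (n + 1)

lemma le_τge_obj_of_le {m : ℤ} {X : C} (hX : t.le m X) : t.le m ((d.τge m).obj X) := by
  obtain ⟨n, rfl⟩ : ∃ n, m = n + 1 := ⟨m - 1, by omega⟩
  have : t.IsLE ((d.τle n).obj X) n := ⟨d.τle_mem n X⟩
  have := t.isLE_shift ((d.τle n).obj X) n 1 (n - 1)
  have := t.isLE_of_le (((d.τle n).obj X)⟦(1 : ℤ)⟧) (n - 1) (n + 1)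
  exact (t.isLE₂ _ (rot_of_distTriang _ (d.triangle_mem n X)) (n + 1) ⟨hX⟩ this).le

noncomputable def hObjIsoOfLE {m : ℤ} {X : C} (hX : t.le m X) :
    (d.H m).obj X ≅ ((d.τge m).obj X)⟦m⟧ :=
  have := d.isIso_ι_app_of_le (d.le_τge_obj_of_le hX)
  (shiftFunctor C m).mapIso (asIso ((d.ι m).app ((d.τge m).obj X)))

lemma heart_H_obj_of_le {m : ℤ} {X : C} (hX : t.le m X) : Heart t ((d.H m).obj X) :=
  ⟨(t.le 0).prop_of_iso (d.hObjIsoOfLE hX).symm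
      (t.le_shift m m 0 (by omega) _ (d.le_τge_obj_of_le hX)),
    (t.ge 0).prop_of_iso (d.hObjIsoOfLE hX).symm
      (t.ge_shift m m 0 (by omega) _ (d.τge_mem m X))⟩

lemma isZero_H_obj_iff_le_sub_one {m : ℤ} {X : C} (hX : t.le m X) :
    IsZero ((d.H m).obj X) ↔ t.le (m - 1) X := by
  rw [(d.hObjIsoOfLE hX).isZero_iff, d.le_iff_isZero_τge (sub_add_cancel m 1)]
  exact ⟨IsZero.of_full_of_faithful_of_isZero (shiftFunctor C m) _,
    (shiftFunctor C m).map_isZero⟩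

lemma isZero_H_obj_of_le {m q : ℤ} {X : C} (hX : t.le m X) (hq : m < q) :
    IsZero ((d.H q).obj X) := by
  have hτ : IsZero ((d.τge q).obj X) :=
    (d.le_iff_isZero_τge (sub_add_cancel q 1) X).1 (t.le_monotone (by omega) _ hX)
  have : t.ge (q + 1) ((d.τge q).obj X) := (t.isGE_of_isZero hτ (q + 1)).ge
  exact (shiftFunctor C q).map_isZero (d.isZero_τle_obj_of_ge this)

end TruncData

noncomputable def Fan.IsLimit.isoOfIsZero {F : ℤ → C} {c : C} {p : ∀ q : ℤ, c ⟶ F q}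
    (hL : IsLimit (Fan.mk c p)) (m : ℤ) (hz : ∀ q, q ≠ m → IsZero (F q)) : c ≅ F m := by
  classical
  let s : Fan F := Fan.mk (F m)
    (fun q => if h : q = m then eqToHom (by rw [h]) else (hz q h).from_ (F m))
  have h1 : hL.lift s ≫ p m = 𝟙 (F m) := by simpa [s] using hL.fac s ⟨m⟩
  refine ⟨p m, hL.lift s, hL.hom_ext ?_, h1⟩
  rintro ⟨j⟩
  by_cases hj : j = m
  · subst hj
    simp only [Fan.mk_π_app, assoc, h1, comp_id, id_comp]
  · exact (hz j hj).eq_of_tgt _ _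

section Monoidal

open ZeroObject

variable [MonoidalCategory C] [MonoidalTriangulated C]

lemma isZero_tensor_of_isZero_left {X : C} (hX : IsZero X) (Y : C) : IsZero (X ⊗ Y) := by
  have hT := MonoidalTriangulated.whiskerRight_distinguished Y _ (contractible_distinguished X)
  have h0 : IsZero ((0 : C) ⊗ Y) := by
    refine Triangle.isZero₃_of_isIso₁ _ hT ?_
    change IsIso (𝟙 X ▷ Y)
    rw [id_whiskerRight]
    infer_instance
  exact h0.of_iso (whiskerRightIso hX.isoZero Y)

lemma isZero_tensor_of_isZero_right {Y : C} (hY : IsZero Y) (X : C) : IsZero (X ⊗ Y) := by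
  have hT := MonoidalTriangulated.whiskerLeft_distinguished X _ (contractible_distinguished Y)
  have h0 : IsZero (X ⊗ (0 : C)) := by
    refine Triangle.isZero₃_of_isIso₁ _ hT ?_
    change IsIso (X ◁ 𝟙 Y)
    rw [whiskerLeft_id]
    infer_instance
  exact h0.of_iso (whiskerLeftIso X hY.isoZero)

lemma le_add_tensor {t : TStructure C} (h0 : (0 : ℤ) ∈ dev C t 0) {a b : ℤ} {X Y : C}
    (hX : t.le a X) (hY : t.le b Y) : t.le (a + b) (X ⊗ Y) := by
  have hXY : t.le 0 ((X⟦a⟧) ⊗ (Y⟦b⟧)) :=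
    h0.1 _ _ (t.le_shift a a 0 (by omega) X hX) (t.le_shift b b (0 + 0) (by omega) Y hY)
  have e : (X⟦a⟧) ⊗ (Y⟦b⟧) ≅ (X ⊗ Y)⟦a + b⟧ :=
    MonoidalTriangulated.shiftTensor a X (Y⟦b⟧) ≪≫
      (shiftFunctor C a).mapIso (MonoidalTriangulated.tensorShift b X Y) ≪≫
      ((shiftFunctorAdd' C b a (a + b) (add_comm b a)).app (X ⊗ Y)).symm
  rw [← t.shift_le (a + b) 0 (a + b) (add_zero _), ObjectProperty.prop_shift_iff]
  exact (t.le 0).prop_of_iso e hXY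

namespace TruncData

variable {t t₁ : TStructure C} (d : TruncData C t)

noncomputable def hTensorSelfIsoOfLE (hd : Kunneth d) {m : ℤ} {X : C} (hX : t.le m X) :
    (d.H (m + m)).obj (X ⊗ X) ≅ (d.H m).obj X ⊗ (d.H m).obj X := by
  refine Fan.IsLimit.isoOfIsZero (hd (m + m) X X).choose_spec.some m (fun q hq => ?_) ≪≫
    eqToIso (by rw [add_sub_cancel_right])
  -- Every other Künneth summand has a factor `H^q(X)` with `q > m`.
  rcases lt_or_gt_of_ne hq with h | h
  · exact isZero_tensor_of_isZero_right (d.isZero_H_obj_of_le hX (by omega)) _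
  · exact isZero_tensor_of_isZero_left (d.isZero_H_obj_of_le hX h) _

lemma not_isZero_H_tensor_self (hd : Kunneth d) (hred : TensorReduced t) {m : ℤ} {X : C}
    (hX : t.le m X) (hH : ¬ IsZero ((d.H m).obj X)) :
    ¬ IsZero ((d.H (m + m)).obj (X ⊗ X)) := fun h =>
  hH (hred _ (d.heart_H_obj_of_le hX) (h.of_iso (d.hTensorSelfIsoOfLE hd hX).symm))

lemma two_pow_mul_le_of_aisle_le (hd : Kunneth d) (h0 : (0 : ℤ) ∈ dev C t 0)
    (hred : TensorReduced t) (h0₁ : (0 : ℤ) ∈ dev C t₁ 0) {c : ℤ}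
    (hc : ∀ Z : C, t₁.le 0 Z → t.le c Z) (j : ℕ) {k : ℤ} {X : C} (hX₁ : t₁.le 0 X)
    (hX : t.le k X) (hH : ¬ IsZero ((d.H k).obj X)) : 2 ^ j * k ≤ c := by
  induction j generalizing k X with
  | zero =>
    rw [pow_zero, one_mul]
    by_contra! hck
    exact hH (d.isZero_H_obj_of_le (hc X hX₁) hck)
  | succ j ih =>
    have hsq := ih (k := k + k) (X := X ⊗ X) (h0₁.1 X X hX₁ (by rwa [zero_add]))
      (le_add_tensor h0 hX hX) (d.not_isZero_H_tensor_self hd hred hX hH)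
    calc 2 ^ (j + 1) * k = 2 ^ j * (k + k) := by ring
      _ ≤ c := hsq

lemma aisle_le_of_aisle_le_shift (ht : IsBounded t) (hd : Kunneth d)
    (h0 : (0 : ℤ) ∈ dev C t 0) (hred : TensorReduced t) (h0₁ : (0 : ℤ) ∈ dev C t₁ 0) {c : ℤ}
    (hc : ∀ Z : C, t₁.le 0 Z → t.le c Z) (X : C) (hX₁ : t₁.le 0 X) : t.le 0 X := by
  by_contra hX
  have hpos : ∀ z, t.le z X → 1 ≤ z := fun z hz => by
    by_contra! hz1
    exact hX (t.le_monotone (by omega) _ hz)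
  obtain ⟨a, b, hb, -⟩ := ht X
  obtain ⟨k, hk, hkmin⟩ := Int.exists_least_of_bdd ⟨1, hpos⟩ ⟨b, hb⟩
  have hH : ¬ IsZero ((d.H k).obj X) := fun h => by
    have := hkmin _ ((d.isZero_H_obj_iff_le_sub_one hk).1 h)
    omega
  have hbound := d.two_pow_mul_le_of_aisle_le hd h0 hred h0₁ hc c.toNat hX₁ hk hH
  have hk1 := hpos k hk
  have hc2 : (c.toNat : ℤ) < 2 ^ c.toNat := by exact_mod_cast Nat.lt_two_pow_self
  nlinarith [Int.self_le_toNat c]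

end TruncData

end Monoidal

/-- Two equivalent tensor reduced monoidal t-structures on a monoidal triangulated
category are equal. -/
theorem statement9 {C : Type*} [Category C] [Preadditive C] [HasZeroObject C] [HasShift C ℤ]
    [∀ n : ℤ, (shiftFunctor C n).Additive] [Pretriangulated C] [MonoidalCategory C]
    [MonoidalTriangulated C] (hC : ∃ X : C, ¬ IsZero X)
    (t t₁ : TStructure C) (ht : IsBounded t) (ht₁ : IsBounded t₁)
    (d : TruncData C t) (d₁ : TruncData C t₁) (hd : Kunneth d) (hd₁ : Kunneth d₁)
    (h0 : (0 : ℤ) ∈ dev C t 0) (h0₁ : (0 : ℤ) ∈ dev C t₁ 0)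
    (hred : TensorReduced t) (hred₁ : TensorReduced t₁)
    (m n : ℤ) (hmn : m ≤ n)
    (h1 : ∀ X : C, t.le m X → t₁.le 0 X) (h2 : ∀ X : C, t₁.le 0 X → t.le n X) :
    t = t₁ := by
  have h1' : ∀ X : C, t.le 0 X → t₁.le (-m) X := fun X hX => by
    rw [← t₁.shift_le (-m) 0 (-m) (add_zero _), ObjectProperty.prop_shift_iff]
    exact h1 _ (t.le_shift 0 (-m) m (by omega) X hX)
  refine TStructure.ext_of_le_zero_iff fun X => ⟨fun hX => ?_, fun hX => ?_⟩
  · exact d₁.aisle_le_of_aisle_le_shift ht₁ hd₁ h0₁ hred₁ h0 h1' X hX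
  · exact d.aisle_le_of_aisle_le_shift ht hd h0 hred h0₁ h2 X hX

end Paper
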